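/- arXiv:2605.13031 — 5 statements merged into one kernel-verified Lean document; each statement's English description precedes it below -/
import Mathlib

section
/- Let Ω : ℝ → ℝ³ be continuous, let Q : ℝ → ℝ^{3×3} be differentiable with Q(t) ∈ SO(3) and Q̇(t) = Q(t)Ω(t)_× for all t, and let Ā : ℝ → ℝ^{5×5} be continuous. Set T(t) := I₅ ⊗ Q(t) ∈ ℝ^{15×15}. If x : ℝ → ℝ^{15} is differentiable and satisfies ẋ(t) = (Ā(t) ⊗ I₃ − I₅ ⊗ Ω(t)_×) x(t) for all t, then the transformed trajectory x̄(t) := T(t)x(t) satisfies d/dt x̄(t) = (Ā(t) ⊗ I₃) x̄(t) for all t. -/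
/-
With `x̄ = (I ⊗ Q) x`, the product rule gives
`d/dt x̄ = (I ⊗ QΩ_×) x + (I ⊗ Q)(Ā ⊗ I − I ⊗ Ω_×) x`.
The two `Ω_×` terms cancel, and `I ⊗ Q` commutes with `Ā ⊗ I`, leaving `(Ā ⊗ I) x̄`.
-/

open Matrix
open scoped Kronecker

/-- For `ω ∈ ℝ³`, the skew-symmetric matrix `ω_×` with `ω_× v = ω × v`. -/
def skew (ω : Fin 3 → ℝ) : Matrix (Fin 3) (Fin 3) ℝ :=
  !![0, -ω 2, ω 1; ω 2, 0, -ω 0; -ω 1, ω 0, 0]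

section Derivatives

variable {𝕜 : Type*} [NontriviallyNormedField 𝕜] {m n : Type*} {t : 𝕜}

theorem HasDerivAt.matrix_mulVec_apply [Fintype n] {M : 𝕜 → Matrix m n 𝕜} {M' : Matrix m n 𝕜}
    {v : 𝕜 → n → 𝕜} {v' : n → 𝕜}
    (hM : ∀ i j, HasDerivAt (fun u => M u i j) (M' i j) t)
    (hv : ∀ j, HasDerivAt (fun u => v u j) (v' j) t) (i : m) :
    HasDerivAt (fun u => (M u *ᵥ v u) i) ((M' *ᵥ v t + M t *ᵥ v') i) t := by
  simp only [mulVec, dotProduct, Pi.add_apply, ← Finset.sum_add_distrib]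
  exact HasDerivAt.fun_sum fun j _ => (hM i j).mul (hv j)

theorem HasDerivAt.kronecker_apply_left {k l : Type*} (A : Matrix k l 𝕜)
    {Q : 𝕜 → Matrix m n 𝕜} {Q' : Matrix m n 𝕜}
    (hQ : ∀ i j, HasDerivAt (fun u => Q u i j) (Q' i j) t) (p : k × m) (q : l × n) :
    HasDerivAt (fun u => (A ⊗ₖ Q u) p q) ((A ⊗ₖ Q') p q) t := by
  simp only [kroneckerMap_apply]
  exact (hQ p.2 q.2).const_mul _

end Derivatives

theorem one_kronecker_mul_add_one_kronecker_mul_sub {R m n : Type*} [CommRing R]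
    [Fintype m] [DecidableEq m] [Fintype n] [DecidableEq n]
    (A : Matrix m m R) (Q S : Matrix n n R) :
    (1 : Matrix m m R) ⊗ₖ (Q * S) + ((1 : Matrix m m R) ⊗ₖ Q) * (A ⊗ₖ 1 - 1 ⊗ₖ S)
      = (A ⊗ₖ 1) * ((1 : Matrix m m R) ⊗ₖ Q) := by
  simp only [mul_sub, ← mul_kronecker_mul, one_mul, mul_one]
  abel

theorem stmt3_general
    (Ω : ℝ → Fin 3 → ℝ)
    (Q : ℝ → Matrix (Fin 3) (Fin 3) ℝ)
    (hQ_deriv : ∀ t i j, HasDerivAt (fun u => Q u i j) ((Q t * skew (Ω t)) i j) t)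
    (Abar : ℝ → Matrix (Fin 5) (Fin 5) ℝ)
    (x : ℝ → Fin 5 × Fin 3 → ℝ)
    (hx : ∀ t p, HasDerivAt (fun u => x u p)
      (((Abar t ⊗ₖ (1 : Matrix (Fin 3) (Fin 3) ℝ)
          - (1 : Matrix (Fin 5) (Fin 5) ℝ) ⊗ₖ skew (Ω t)).mulVec (x t)) p) t) :
    ∀ t p, HasDerivAt
      (fun u => (((1 : Matrix (Fin 5) (Fin 5) ℝ) ⊗ₖ Q u).mulVec (x u)) p)
      (((Abar t ⊗ₖ (1 : Matrix (Fin 3) (Fin 3) ℝ)).mulVec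
        (((1 : Matrix (Fin 5) (Fin 5) ℝ) ⊗ₖ Q t).mulVec (x t))) p) t := by
  intro t p
  have hprod := HasDerivAt.matrix_mulVec_apply
    (HasDerivAt.kronecker_apply_left 1 (hQ_deriv t)) (hx t) p
  rwa [mulVec_mulVec, ← add_mulVec, one_kronecker_mul_add_one_kronecker_mul_sub,
    ← mulVec_mulVec] at hprod

/-- The differentiation step in the proof of Lemma 3: with `Q(t) ∈ SO(3)`,
`Q̇ = QΩ_×`, and `T(t) = I₅ ⊗ Q(t)`, any solution of
`ẋ = (Ā(t) ⊗ I₃ − I₅ ⊗ Ω(t)_×) x` is transformed by `x̄ = T x` into a solution of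
`d/dt x̄ = (Ā(t) ⊗ I₃) x̄`.  `ℝ^{15}` is realized as `Fin 5 × Fin 3 → ℝ`, and
derivatives of vector-valued functions are taken componentwise. -/
theorem stmt3
    (Ω : ℝ → Fin 3 → ℝ) (hΩ_cont : Continuous Ω)
    (Q : ℝ → Matrix (Fin 3) (Fin 3) ℝ)
    (hQ_SO : ∀ t, (Q t)ᵀ * Q t = 1 ∧ (Q t).det = 1)
    (hQ_deriv : ∀ t i j, HasDerivAt (fun u => Q u i j) ((Q t * skew (Ω t)) i j) t)
    (Abar : ℝ → Matrix (Fin 5) (Fin 5) ℝ) (hAbar_cont : Continuous Abar)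
    (x : ℝ → Fin 5 × Fin 3 → ℝ)
    (hx : ∀ t p, HasDerivAt (fun u => x u p)
      (((Abar t ⊗ₖ (1 : Matrix (Fin 3) (Fin 3) ℝ)
          - (1 : Matrix (Fin 5) (Fin 5) ℝ) ⊗ₖ skew (Ω t)).mulVec (x t)) p) t) :
    ∀ t p, HasDerivAt
      (fun u => (((1 : Matrix (Fin 5) (Fin 5) ℝ) ⊗ₖ Q u).mulVec (x u)) p)
      (((Abar t ⊗ₖ (1 : Matrix (Fin 3) (Fin 3) ℝ)).mulVec
        (((1 : Matrix (Fin 5) (Fin 5) ℝ) ⊗ₖ Q t).mulVec (x t))) p) t :=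
  stmt3_general Ω Q hQ_deriv Abar x hx
end

section
/- Let n, m ≥ 1 and let E : ℝ → ℝ^{n×n}, F : ℝ → ℝ^{n×m}, G : ℝ → ℝ^{m×m} be continuous and uniformly bounded, with E(s) and G(s) symmetric for all s, such that the block matrix [[E(s), F(s)],[F(s)ᵀ, G(s)]] is positive semidefinite for all s. For t ∈ ℝ and δ > 0 define W_E(t,δ) := (1/δ)∫_t^{t+δ} E(s) ds, W_F(t,δ) := (1/δ)∫_t^{t+δ} F(s) ds, W_G(t,δ) := (1/δ)∫_t^{t+δ} G(s) ds, and W(t,t+δ) := [[W_E, W_F],[W_Fᵀ, W_G]] ∈ ℝ^{(n+m)×(n+m)}. Suppose there exist δ, μ > 0 such that for all t ≥ 0, W_E(t,δ) ⪰ μ Iₙ and W_G(t,δ) − W_F(t,δ)ᵀ W_E(t,δ)⁻¹ W_F(t,δ) ⪰ μ Iₘ. Then there exists μ* > 0 such that for all t ≥ 0, W(t,t+δ) ⪰ μ* I_{n+m}. -/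
open Matrix MeasureTheory intervalIntegral

/-! Put `w = W_E⁻¹ W_F y`. Completing the square, the quadratic form of the block matrix at
`(x, y)` is `(x + w)ᵀ W_E (x + w) + yᵀ S y ≥ μ (|x + w|² + |y|²)`, where `S` is the Schur
complement. Since `W_E ⪰ μ I` and the entries of `W_F` are bounded by those of `F`, we have
`|w|² ≤ c |y|²` with `c` independent of `t`, hence `|x|² + |y|² ≤ 2 (1 + c) (|x + w|² + |y|²)`. -/

theorem abs_one_div_mul_intervalIntegral_le {f : ℝ → ℝ} {K δ : ℝ} (hδ : 0 < δ)
    (hf : ∀ s, |f s| ≤ K) (t : ℝ) : |1 / δ * ∫ s in t..(t + δ), f s| ≤ K := by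
  have h := norm_integral_le_of_norm_le_const (a := t) (b := t + δ) (f := f) fun s _ => hf s
  rw [add_sub_cancel_left, abs_of_pos hδ, Real.norm_eq_abs] at h
  rw [abs_mul, abs_of_pos (one_div_pos.2 hδ), one_div, inv_mul_le_iff₀ hδ, mul_comm]
  exact h

namespace Matrix

variable {ι κ : Type*} [Fintype ι] [Fintype κ]

theorem dotProduct_self_sub_le (x y : ι → ℝ) :
    (x - y) ⬝ᵥ (x - y) ≤ 2 * (x ⬝ᵥ x) + 2 * (y ⬝ᵥ y) := by
  have := dotProduct_star_self_nonneg (x + y)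
  simp only [star_trivial, dotProduct_add, add_dotProduct, dotProduct_sub, sub_dotProduct,
    dotProduct_comm y x] at this ⊢
  linarith

theorem dotProduct_sq_le (x y : ι → ℝ) : (x ⬝ᵥ y) ^ 2 ≤ (x ⬝ᵥ x) * (y ⬝ᵥ y) := by
  simpa [dotProduct, sq] using Finset.sum_mul_sq_le_sq_mul_sq Finset.univ x y

theorem mulVec_dotProduct_self_le {B : Matrix ι κ ℝ} {K : ℝ} (hB : ∀ i j, |B i j| ≤ K)
    (y : κ → ℝ) :
    (B *ᵥ y) ⬝ᵥ (B *ᵥ y) ≤ Fintype.card ι * Fintype.card κ * K ^ 2 * (y ⬝ᵥ y) := by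
  have hrow : ∀ i, (B *ᵥ y) i ^ 2 ≤ Fintype.card κ * K ^ 2 * (y ⬝ᵥ y) := fun i =>
    calc (B *ᵥ y) i ^ 2 ≤ (B i ⬝ᵥ B i) * (y ⬝ᵥ y) := dotProduct_sq_le (B i) y
      _ ≤ Fintype.card κ * K ^ 2 * (y ⬝ᵥ y) := by
        gcongr
        · exact dotProduct_star_self_nonneg y
        · calc B i ⬝ᵥ B i = ∑ j, |B i j| ^ 2 := by simp [dotProduct, sq]
            _ ≤ ∑ _j : κ, K ^ 2 := Finset.sum_le_sum fun j _ =>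
              pow_le_pow_left₀ (abs_nonneg _) (hB i j) 2
            _ = _ := by simp
  calc (B *ᵥ y) ⬝ᵥ (B *ᵥ y) = ∑ i, (B *ᵥ y) i ^ 2 := by simp [dotProduct, sq]
    _ ≤ ∑ _i : ι, Fintype.card κ * K ^ 2 * (y ⬝ᵥ y) := Finset.sum_le_sum fun i _ => hrow i
    _ = _ := by simp; ring

variable [DecidableEq ι]

theorem posSemidef_sub_smul_one_iff {M : Matrix ι ι ℝ} {μ : ℝ} :
    (M - μ • 1).PosSemidef ↔ M.IsHermitian ∧ ∀ x, μ * (x ⬝ᵥ x) ≤ x ⬝ᵥ M *ᵥ x := by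
  have hI : (μ • 1 : Matrix ι ι ℝ).IsHermitian := by
    rw [smul_one_eq_diagonal]; exact isHermitian_diagonal _
  have hquad : ∀ x : ι → ℝ, star x ⬝ᵥ (M - μ • 1) *ᵥ x = x ⬝ᵥ M *ᵥ x - μ * (x ⬝ᵥ x) := by
    intro x
    simp only [star_trivial, sub_mulVec, smul_mulVec, one_mulVec, dotProduct_sub,
      dotProduct_smul, smul_eq_mul]
  rw [posSemidef_iff_dotProduct_mulVec]
  simp only [hquad, sub_nonneg]
  exact and_congr_left fun _ => ⟨fun h => by simpa using h.add hI, fun h => h.sub hI⟩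

theorem PosSemidef.isUnit_of_sub_smul_one {M : Matrix ι ι ℝ} {μ : ℝ} (hμ : 0 < μ)
    (h : (M - μ • 1).PosSemidef) : IsUnit M := by
  simpa using (PosDef.posSemidef_add h (PosDef.one.smul hμ)).isUnit

theorem sq_mul_inv_mulVec_dotProduct_self_le {A : Matrix ι ι ℝ} {μ : ℝ} (hμ : 0 < μ)
    (hA : (A - μ • 1).PosSemidef) (u : ι → ℝ) :
    μ ^ 2 * ((A⁻¹ *ᵥ u) ⬝ᵥ (A⁻¹ *ᵥ u)) ≤ u ⬝ᵥ u := by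
  set w := A⁻¹ *ᵥ u
  have hAw : A *ᵥ w = u := by
    rw [mulVec_mulVec, mul_nonsing_inv _ ((isUnit_iff_isUnit_det A).1
      (hA.isUnit_of_sub_smul_one hμ)), one_mulVec]
  have hlow : μ * (w ⬝ᵥ w) ≤ w ⬝ᵥ u := hAw ▸ (posSemidef_sub_smul_one_iff.1 hA).2 w
  have hw := dotProduct_star_self_nonneg w
  have hu := dotProduct_star_self_nonneg u
  simp only [star_trivial] at hw hu
  rcases hw.eq_or_lt with hw0 | hwpos
  · rw [← hw0, mul_zero]; exact hu
  refine le_of_mul_le_mul_left ?_ hwpos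
  calc w ⬝ᵥ w * (μ ^ 2 * (w ⬝ᵥ w)) = (μ * (w ⬝ᵥ w)) ^ 2 := by ring
    _ ≤ (w ⬝ᵥ u) ^ 2 := pow_le_pow_left₀ (by positivity) hlow 2
    _ ≤ w ⬝ᵥ w * (u ⬝ᵥ u) := dotProduct_sq_le w u

theorem posSemidef_fromBlocks_sub_smul_one [DecidableEq κ] {A : Matrix ι ι ℝ}
    {B : Matrix ι κ ℝ} {C : Matrix κ κ ℝ} {μ c : ℝ} (hμ : 0 < μ) (hc : 0 ≤ c)
    (hA : (A - μ • 1).PosSemidef) (hS : (C - Bᵀ * A⁻¹ * B - μ • 1).PosSemidef)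
    (hB : ∀ y, ((A⁻¹ * B) *ᵥ y) ⬝ᵥ ((A⁻¹ * B) *ᵥ y) ≤ c * (y ⬝ᵥ y)) :
    (fromBlocks A B Bᵀ C - (μ / (2 * (1 + c))) • 1).PosSemidef := by
  have := (hA.isUnit_of_sub_smul_one hμ).invertible
  obtain ⟨hAh, hAq⟩ := posSemidef_sub_smul_one_iff.1 hA
  obtain ⟨hSh, hSq⟩ := posSemidef_sub_smul_one_iff.1 hS
  have hBt : Bᵀ = Bᴴ := (conjTranspose_eq_transpose_of_trivial B).symm
  refine posSemidef_sub_smul_one_iff.2 ⟨?_, fun v => ?_⟩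
  · rw [hBt, IsHermitian.fromBlocks₁₁ _ _ hAh]
    rwa [hBt] at hSh
  rw [← Sum.elim_comp_inl_inr v]
  set x := v ∘ Sum.inl
  set y := v ∘ Sum.inr
  set w := (A⁻¹ * B) *ᵥ y
  set z := x + w
  have hQ : (x ⊕ᵥ y) ⬝ᵥ fromBlocks A B Bᵀ C *ᵥ (x ⊕ᵥ y)
      = z ⬝ᵥ A *ᵥ z + y ⬝ᵥ (C - Bᵀ * A⁻¹ * B) *ᵥ y := by
    have h := schur_complement_eq₁₁ B C x y hAh
    simp only [star_trivial, ← dotProduct_mulVec, ← hBt] at h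
    exact h
  have hx : x ⬝ᵥ x ≤ 2 * (z ⬝ᵥ z) + 2 * (w ⬝ᵥ w) := by
    simpa [z] using dotProduct_self_sub_le z w
  have hz := dotProduct_star_self_nonneg z
  have hy := dotProduct_star_self_nonneg y
  simp only [star_trivial] at hz hy
  have hnorm : x ⬝ᵥ x + y ⬝ᵥ y ≤ 2 * (1 + c) * (z ⬝ᵥ z + y ⬝ᵥ y) := by
    nlinarith [hB y, mul_nonneg hc hz]
  rw [hQ, sumElim_dotProduct_sumElim]
  calc μ / (2 * (1 + c)) * (x ⬝ᵥ x + y ⬝ᵥ y)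
      ≤ μ / (2 * (1 + c)) * (2 * (1 + c) * (z ⬝ᵥ z + y ⬝ᵥ y)) := by gcongr
    _ = μ * (z ⬝ᵥ z) + μ * (y ⬝ᵥ y) := by field_simp
    _ ≤ _ := add_le_add (hAq z) (hSq y)

end Matrix

theorem stmt5_general
    (n m : ℕ)
    (E : ℝ → Matrix (Fin n) (Fin n) ℝ)
    (F : ℝ → Matrix (Fin n) (Fin m) ℝ)
    (G : ℝ → Matrix (Fin m) (Fin m) ℝ)
    (hbdd : ∃ K : ℝ, ∀ s : ℝ, (∀ i j, |E s i j| ≤ K) ∧ (∀ i j, |F s i j| ≤ K) ∧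
      (∀ i j, |G s i j| ≤ K))
    (δ μ : ℝ) (hδ : 0 < δ) (hμ : 0 < μ)
    (WE : ℝ → Matrix (Fin n) (Fin n) ℝ)
    (WF : ℝ → Matrix (Fin n) (Fin m) ℝ)
    (hWF : ∀ t, WF t = (1 / δ) • (Matrix.of fun i j => ∫ s in t..(t + δ), F s i j))
    (WG : ℝ → Matrix (Fin m) (Fin m) ℝ)
    (hWE_PE : ∀ t : ℝ, 0 ≤ t → (WE t - μ • (1 : Matrix (Fin n) (Fin n) ℝ)).PosSemidef)
    (hSchur_PE : ∀ t : ℝ, 0 ≤ t →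
      (WG t - (WF t)ᵀ * (WE t)⁻¹ * WF t - μ • (1 : Matrix (Fin m) (Fin m) ℝ)).PosSemidef) :
    ∃ μstar : ℝ, 0 < μstar ∧ ∀ t : ℝ, 0 ≤ t →
      (Matrix.fromBlocks (WE t) (WF t) (WF t)ᵀ (WG t)
        - μstar • (1 : Matrix (Fin n ⊕ Fin m) (Fin n ⊕ Fin m) ℝ)).PosSemidef := by
  obtain ⟨K, hK⟩ := hbdd
  refine ⟨μ / (2 * (1 + n * m * K ^ 2 / μ ^ 2)), by positivity, fun t ht => ?_⟩
  have hWF_le : ∀ i j, |WF t i j| ≤ K := fun i j => by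
    simpa [hWF] using abs_one_div_mul_intervalIntegral_le hδ (fun s => (hK s).2.1 i j) t
  refine posSemidef_fromBlocks_sub_smul_one hμ (by positivity) (hWE_PE t ht) (hSchur_PE t ht)
    fun y => ?_
  have hw := sq_mul_inv_mulVec_dotProduct_self_le hμ (hWE_PE t ht) (WF t *ᵥ y)
  have hu := mulVec_dotProduct_self_le hWF_le y
  rw [Fintype.card_fin, Fintype.card_fin] at hu
  rw [← mulVec_mulVec, div_mul_eq_mul_div, le_div_iff₀ (by positivity)]
  linarith

/-- Lemma 4 of the paper: if the time-averaged block `W_E` and the Schur complement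
`W_G − W_Fᵀ W_E⁻¹ W_F` of a time-averaged positive semidefinite block matrix are
uniformly bounded below by `μ I`, then the full averaged block matrix is uniformly
bounded below by some `μ* I`.  Integrals of matrix-valued functions are entrywise,
uniform boundedness is entrywise, and `W ⪰ μ I` is `(W - μ • 1).PosSemidef`. -/
theorem stmt5
    (n m : ℕ) (hn : 1 ≤ n) (hm : 1 ≤ m)
    (E : ℝ → Matrix (Fin n) (Fin n) ℝ)
    (F : ℝ → Matrix (Fin n) (Fin m) ℝ)
    (G : ℝ → Matrix (Fin m) (Fin m) ℝ)
    (hE_cont : Continuous E) (hF_cont : Continuous F) (hG_cont : Continuous G)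
    (hbdd : ∃ K : ℝ, ∀ s : ℝ, (∀ i j, |E s i j| ≤ K) ∧ (∀ i j, |F s i j| ≤ K) ∧
      (∀ i j, |G s i j| ≤ K))
    (hE_sym : ∀ s, (E s)ᵀ = E s) (hG_sym : ∀ s, (G s)ᵀ = G s)
    (hPSD : ∀ s, (Matrix.fromBlocks (E s) (F s) (F s)ᵀ (G s)).PosSemidef)
    (δ μ : ℝ) (hδ : 0 < δ) (hμ : 0 < μ)
    (WE : ℝ → Matrix (Fin n) (Fin n) ℝ)
    (hWE : ∀ t, WE t = (1 / δ) • (Matrix.of fun i j => ∫ s in t..(t + δ), E s i j))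
    (WF : ℝ → Matrix (Fin n) (Fin m) ℝ)
    (hWF : ∀ t, WF t = (1 / δ) • (Matrix.of fun i j => ∫ s in t..(t + δ), F s i j))
    (WG : ℝ → Matrix (Fin m) (Fin m) ℝ)
    (hWG : ∀ t, WG t = (1 / δ) • (Matrix.of fun i j => ∫ s in t..(t + δ), G s i j))
    (hWE_PE : ∀ t : ℝ, 0 ≤ t → (WE t - μ • (1 : Matrix (Fin n) (Fin n) ℝ)).PosSemidef)
    (hSchur_PE : ∀ t : ℝ, 0 ≤ t →
      (WG t - (WF t)ᵀ * (WE t)⁻¹ * WF t - μ • (1 : Matrix (Fin m) (Fin m) ℝ)).PosSemidef) :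
    ∃ μstar : ℝ, 0 < μstar ∧ ∀ t : ℝ, 0 ≤ t →
      (Matrix.fromBlocks (WE t) (WF t) (WF t)ᵀ (WG t)
        - μstar • (1 : Matrix (Fin n ⊕ Fin m) (Fin n ⊕ Fin m) ℝ)).PosSemidef :=
  stmt5_general n m E F G hbdd δ μ hδ hμ WE WF hWF WG hWE_PE hSchur_PE
end

section
/- Let Q_B, Q_T : ℝ → SO(3), p_B, v_B, p_T, v_T : ℝ → ℝ³ be differentiable, let a_B, a_T, Ω, ω_T : ℝ → ℝ³ be continuous and g ∈ ℝ, and suppose for all t: ṗ_B = v_B, v̇_B = Q_B a_B + g e₃, Q̇_B = Q_B Ω_×, ṗ_T = v_T, v̇_T = Q_T a_T + g e₃, Q̇_T = Q_T ω_{T×}. Define the 5×5 matrices X_B(t) := [[Q_B, v_B, p_B],[0_{2×3}, I₂]], X_T(t) := [[Q_T, v_T, p_T],[0_{2×3}, I₂]], X(t) := X_B(t)⁻¹ X_T(t), U_B(t) := [[Ω_×, a_B, 0_{3×1}],[0_{2×3}, 0_{2×2}]], U_T(t) := [[ω_{T×}, a_T, 0_{3×1}],[0_{2×3}, 0_{2×2}]],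 and N := [[0_{3×3}, 0_{3×2}],[0_{2×3}, [[0,−1],[0,0]]]]. Then for all t: Ẋ(t) = X(t)U_T(t) − U_B(t)X(t) + N X(t) − X(t) N. -/
open Matrix

/-- The element `[[R, v, x],[0_{2×3}, I₂]]` of the extended special Euclidean group
`SE₂(3)`, as a `5 × 5` matrix indexed by `Fin 3 ⊕ Fin 2`. -/
def se23 (R : Matrix (Fin 3) (Fin 3) ℝ) (v x : Fin 3 → ℝ) :
    Matrix (Fin 3 ⊕ Fin 2) (Fin 3 ⊕ Fin 2) ℝ :=
  Matrix.fromBlocks R (Matrix.of fun i j => ![v i, x i] j) 0 1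

/-- The Lie-algebra element `[[ω_×, u, 0_{3×1}],[0_{2×3}, 0_{2×2}]]`. -/
def Umat (ω u : Fin 3 → ℝ) : Matrix (Fin 3 ⊕ Fin 2) (Fin 3 ⊕ Fin 2) ℝ :=
  Matrix.fromBlocks (skew ω) (Matrix.of fun i j => ![u i, 0] j) 0 0

/-- The constant matrix `N = [[0_{3×3}, 0_{3×2}],[0_{2×3}, [[0,−1],[0,0]]]]`. -/
def Nmat : Matrix (Fin 3 ⊕ Fin 2) (Fin 3 ⊕ Fin 2) ℝ :=
  Matrix.fromBlocks 0 0 0 !![0, -1; 0, 0]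


lemma se23_mul (A C : Matrix (Fin 3) (Fin 3) ℝ) (a b c d : Fin 3 → ℝ) :
    se23 A a b * se23 C c d = se23 (A*C) (A *ᵥ c + a) (A *ᵥ d + b) := by
  unfold se23
  rw [Matrix.fromBlocks_multiply]
  ext i j
  rcases i with i | i <;> rcases j with j | j <;>
    fin_cases j <;>
    simp [Matrix.mul_apply, Matrix.mulVec, dotProduct, Matrix.add_apply,
      Fin.sum_univ_three]

lemma se23_one : se23 1 0 0 = 1 := by
  unfold se23
  rw [show (Matrix.of fun (i : Fin 3) (j : Fin 2) => ![(0:Fin 3 → ℝ) i, (0:Fin 3 → ℝ) i] j) = 0 by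
    ext i j; fin_cases j <;> simp]
  exact Matrix.fromBlocks_one

lemma se23_inv (R : Matrix (Fin 3) (Fin 3) ℝ) (hR : Rᵀ * R = 1) (v x : Fin 3 → ℝ) :
    (se23 R v x)⁻¹ = se23 Rᵀ (-(Rᵀ *ᵥ v)) (-(Rᵀ *ᵥ x)) := by
  apply Matrix.inv_eq_left_inv
  rw [se23_mul, hR]
  rw [show Rᵀ *ᵥ v + -(Rᵀ *ᵥ v) = 0 by abel, show Rᵀ *ᵥ x + -(Rᵀ *ᵥ x) = 0 by abel]
  exact se23_one

/-- Equation (7) of the paper: the relative extended pose `X = X_B⁻¹X_T` between body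
and target satisfies `Ẋ = X U_T − U_B X + N X − X N`, where body and target obey the
IMU-driven rigid-body dynamics.  Derivatives of matrix-valued functions are entrywise,
and `e₃ = (0,0,1)ᵀ`. -/
theorem stmt10
    (QB QT : ℝ → Matrix (Fin 3) (Fin 3) ℝ)
    (pB vB pT vT : ℝ → Fin 3 → ℝ)
    (aB aT Ω ωT : ℝ → Fin 3 → ℝ)
    (haB : Continuous aB) (haT : Continuous aT) (hΩ : Continuous Ω) (hωT : Continuous ωT)
    (g : ℝ)
    (hQB_SO : ∀ t, (QB t)ᵀ * QB t = 1 ∧ (QB t).det = 1)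
    (hQT_SO : ∀ t, (QT t)ᵀ * QT t = 1 ∧ (QT t).det = 1)
    (hpB : ∀ t i, HasDerivAt (fun u => pB u i) (vB t i) t)
    (hvB : ∀ t i, HasDerivAt (fun u => vB u i)
      ((QB t).mulVec (aB t) i + g * ![(0 : ℝ), 0, 1] i) t)
    (hQB : ∀ t i j, HasDerivAt (fun u => QB u i j) ((QB t * skew (Ω t)) i j) t)
    (hpT : ∀ t i, HasDerivAt (fun u => pT u i) (vT t i) t)
    (hvT : ∀ t i, HasDerivAt (fun u => vT u i)
      ((QT t).mulVec (aT t) i + g * ![(0 : ℝ), 0, 1] i) t)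
    (hQT : ∀ t i j, HasDerivAt (fun u => QT u i j) ((QT t * skew (ωT t)) i j) t)
    (X : ℝ → Matrix (Fin 3 ⊕ Fin 2) (Fin 3 ⊕ Fin 2) ℝ)
    (hX : ∀ t, X t = (se23 (QB t) (vB t) (pB t))⁻¹ * se23 (QT t) (vT t) (pT t)) :
    ∀ t i j, HasDerivAt (fun u => X u i j)
      ((X t * Umat (ωT t) (aT t) - Umat (Ω t) (aB t) * X t
        + Nmat * X t - X t * Nmat) i j) t := by
  have horth : ∀ t (a b : Fin 3),
      QB t 0 a * QB t 0 b + QB t 1 a * QB t 1 b + QB t 2 a * QB t 2 b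
        = if a = b then 1 else 0 := by
    intro t a b
    have h := congrFun (congrFun (hQB_SO t).1 a) b
    simpa [Matrix.mul_apply, Fin.sum_univ_three, Matrix.one_apply] using h
  have hXe : ∀ u, X u = se23 ((QB u)ᵀ * QT u) ((QB u)ᵀ *ᵥ (vT u - vB u))
      ((QB u)ᵀ *ᵥ (pT u - pB u)) := by
    intro u
    rw [hX u, se23_inv _ (hQB_SO u).1, se23_mul]
    simp [Matrix.mulVec_add, Matrix.mulVec_neg, sub_eq_add_neg]
  intro t i j
  rcases i with i | i <;> rcases j with j | j
  · -- rotation block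
    have hfun : (fun u => X u (Sum.inl i) (Sum.inl j)) = fun u =>
        QB u 0 i * QT u 0 j + QB u 1 i * QT u 1 j + QB u 2 i * QT u 2 j := by
      funext u
      rw [hXe u]
      simp [se23, Matrix.mul_apply, Fin.sum_univ_three]
    have key := (((hQB t 0 i).mul (hQT t 0 j)).add ((hQB t 1 i).mul (hQT t 1 j))).add
      ((hQB t 2 i).mul (hQT t 2 j))
    have hval : (X t * Umat (ωT t) (aT t) - Umat (Ω t) (aB t) * X t
          + Nmat * X t - X t * Nmat) (Sum.inl i) (Sum.inl j)
        = (QB t * skew (Ω t)) 0 i * QT t 0 j + QB t 0 i * (QT t * skew (ωT t)) 0 j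
          + ((QB t * skew (Ω t)) 1 i * QT t 1 j + QB t 1 i * (QT t * skew (ωT t)) 1 j)
          + ((QB t * skew (Ω t)) 2 i * QT t 2 j + QB t 2 i * (QT t * skew (ωT t)) 2 j) := by
      rw [hXe t]
      fin_cases i <;> fin_cases j <;>
        (simp [se23, Umat, Nmat, skew, Matrix.mul_apply, Matrix.mulVec, dotProduct,
          Fintype.sum_sum_type, Fin.sum_univ_three, Fin.sum_univ_two]
         try ring)
    rw [hfun, hval]
    exact key
  · -- translation blocks
    fin_cases j
    · -- velocity column
      simp only [Fin.zero_eta, Fin.isValue]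
      have hfun : (fun u => X u (Sum.inl i) (Sum.inr 0)) = fun u =>
          QB u 0 i * (vT u 0 - vB u 0) + QB u 1 i * (vT u 1 - vB u 1)
            + QB u 2 i * (vT u 2 - vB u 2) := by
        funext u
        rw [hXe u]
        simp [se23, Matrix.mulVec, dotProduct, Fin.sum_univ_three]
      have key := (((hQB t 0 i).mul ((hvT t 0).sub (hvB t 0))).add
        ((hQB t 1 i).mul ((hvT t 1).sub (hvB t 1)))).add
        ((hQB t 2 i).mul ((hvT t 2).sub (hvB t 2)))
      have hval : (X t * Umat (ωT t) (aT t) - Umat (Ω t) (aB t) * X t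
            + Nmat * X t - X t * Nmat) (Sum.inl i) (Sum.inr 0)
          = (QB t * skew (Ω t)) 0 i * (vT t 0 - vB t 0)
              + QB t 0 i * ((((QT t) *ᵥ (aT t)) 0 + g * ![(0:ℝ),0,1] 0)
                - (((QB t) *ᵥ (aB t)) 0 + g * ![(0:ℝ),0,1] 0))
            + ((QB t * skew (Ω t)) 1 i * (vT t 1 - vB t 1)
              + QB t 1 i * ((((QT t) *ᵥ (aT t)) 1 + g * ![(0:ℝ),0,1] 1)
                - (((QB t) *ᵥ (aB t)) 1 + g * ![(0:ℝ),0,1] 1)))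
            + ((QB t * skew (Ω t)) 2 i * (vT t 2 - vB t 2)
              + QB t 2 i * ((((QT t) *ᵥ (aT t)) 2 + g * ![(0:ℝ),0,1] 2)
                - (((QB t) *ᵥ (aB t)) 2 + g * ![(0:ℝ),0,1] 2))) := by
        have h0 := horth t i 0
        have h1 := horth t i 1
        have h2 := horth t i 2
        rw [hXe t]
        fin_cases i <;>
          (simp only [Fin.reduceFinMk] at h0 h1 h2 ⊢
           norm_num [Fin.ext_iff] at h0 h1 h2
           simp [se23, Umat, Nmat, skew, Matrix.mul_apply, Matrix.mulVec, dotProduct,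
             Fintype.sum_sum_type, Fin.sum_univ_three, Fin.sum_univ_two]
           linear_combination aB t 0 * h0 + aB t 1 * h1 + aB t 2 * h2)
      rw [hfun, hval]
      exact key
    · -- position column
      simp only [Fin.mk_one, Fin.isValue]
      have hfun : (fun u => X u (Sum.inl i) (Sum.inr 1)) = fun u =>
          QB u 0 i * (pT u 0 - pB u 0) + QB u 1 i * (pT u 1 - pB u 1)
            + QB u 2 i * (pT u 2 - pB u 2) := by
        funext u
        rw [hXe u]
        simp [se23, Matrix.mulVec, dotProduct, Fin.sum_univ_three]
      have key := (((hQB t 0 i).mul ((hpT t 0).sub (hpB t 0))).add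
        ((hQB t 1 i).mul ((hpT t 1).sub (hpB t 1)))).add
        ((hQB t 2 i).mul ((hpT t 2).sub (hpB t 2)))
      have hval : (X t * Umat (ωT t) (aT t) - Umat (Ω t) (aB t) * X t
            + Nmat * X t - X t * Nmat) (Sum.inl i) (Sum.inr 1)
          = (QB t * skew (Ω t)) 0 i * (pT t 0 - pB t 0) + QB t 0 i * (vT t 0 - vB t 0)
            + ((QB t * skew (Ω t)) 1 i * (pT t 1 - pB t 1) + QB t 1 i * (vT t 1 - vB t 1))
            + ((QB t * skew (Ω t)) 2 i * (pT t 2 - pB t 2) + QB t 2 i * (vT t 2 - vB t 2)) := by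
        rw [hXe t]
        fin_cases i <;>
          (simp [se23, Umat, Nmat, skew, Matrix.mul_apply, Matrix.mulVec, dotProduct,
            Fintype.sum_sum_type, Fin.sum_univ_three, Fin.sum_univ_two]
           try ring)
      rw [hfun, hval]
      exact key
  · -- bottom-left block: constant 0
    have hfun : (fun u => X u (Sum.inr i) (Sum.inl j)) = fun _ => (0:ℝ) := by
      funext u
      rw [hXe u]
      simp [se23]
    have hval : (X t * Umat (ωT t) (aT t) - Umat (Ω t) (aB t) * X t
          + Nmat * X t - X t * Nmat) (Sum.inr i) (Sum.inl j) = 0 := by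
      rw [hXe t]
      simp [se23, Umat, Nmat, Matrix.mul_apply, Matrix.one_apply,
        Fintype.sum_sum_type, Fin.sum_univ_three, Fin.sum_univ_two]
    rw [hfun, hval]
    exact hasDerivAt_const t 0
  · -- bottom-right block: constant
    have hfun : (fun u => X u (Sum.inr i) (Sum.inr j)) =
        fun _ => (1 : Matrix (Fin 2) (Fin 2) ℝ) i j := by
      funext u
      rw [hXe u]
      simp [se23]
    have hval : (X t * Umat (ωT t) (aT t) - Umat (Ω t) (aB t) * X t
          + Nmat * X t - X t * Nmat) (Sum.inr i) (Sum.inr j) = 0 := by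
      rw [hXe t]
      simp [se23, Umat, Nmat, Matrix.mul_apply, Matrix.one_apply,
        Fintype.sum_sum_type, Fin.sum_univ_three, Fin.sum_univ_two]
    rw [hfun, hval]
    exact hasDerivAt_const t _
end

section
/- Let Ω, ω_T : ℝ → ℝ³ be continuous and let Z, R : ℝ → ℝ^{3×3} be differentiable with Ż(t) = Z(t) ω_T(t)_× and Ṙ(t) = −ω_T(t)_× R(t) + R(t) Ω(t)_× for all t. Then R_z := Z R satisfies Ṙ_z(t) = R_z(t) Ω(t)_× for all t. -/
open Matrix

theorem Matrix.hasDerivAt_mul_apply {𝕜 𝔸 l m n : Type*} [NontriviallyNormedField 𝕜]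
    [NormedRing 𝔸] [NormedAlgebra 𝕜 𝔸] [Fintype m]
    {A : 𝕜 → Matrix l m 𝔸} {B : 𝕜 → Matrix m n 𝔸} {A' : Matrix l m 𝔸} {B' : Matrix m n 𝔸}
    {t : 𝕜} (hA : ∀ i k, HasDerivAt (fun u => A u i k) (A' i k) t)
    (hB : ∀ k j, HasDerivAt (fun u => B u k j) (B' k j) t) (i : l) (j : n) :
    HasDerivAt (fun u => (A u * B u) i j) ((A' * B t + A t * B') i j) t := by
  simp only [mul_apply, add_apply, ← Finset.sum_add_distrib]
  exact HasDerivAt.fun_sum fun k _ => (hA i k).mul (hB k j)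

theorem stmt12_general
    (Ω ωT : ℝ → Fin 3 → ℝ)
    (Z R : ℝ → Matrix (Fin 3) (Fin 3) ℝ)
    (hZ : ∀ t i j, HasDerivAt (fun u => Z u i j) ((Z t * skew (ωT t)) i j) t)
    (hR : ∀ t i j, HasDerivAt (fun u => R u i j)
      ((-(skew (ωT t)) * R t + R t * skew (Ω t)) i j) t) :
    ∀ t i j, HasDerivAt (fun u => (Z u * R u) i j)
      ((Z t * R t * skew (Ω t)) i j) t := by
  intro t i j
  have hcancel : Z t * skew (ωT t) * R t + Z t * (-(skew (ωT t)) * R t + R t * skew (Ω t)) =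
      Z t * R t * skew (Ω t) := by
    noncomm_ring
  simpa only [hcancel] using Matrix.hasDerivAt_mul_apply (hZ t) (hR t) i j

/-- The key invariance step of the observer design: if `Ż = Zω_{T×}` and
`Ṙ = −ω_{T×}R + RΩ_×`, then `R_z = ZR` satisfies `Ṙ_z = R_z Ω_×`.
Derivatives of matrix-valued functions are taken entrywise. -/
theorem stmt12
    (Ω ωT : ℝ → Fin 3 → ℝ) (hΩ : Continuous Ω) (hωT : Continuous ωT)
    (Z R : ℝ → Matrix (Fin 3) (Fin 3) ℝ)
    (hZ : ∀ t i j, HasDerivAt (fun u => Z u i j) ((Z t * skew (ωT t)) i j) t)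
    (hR : ∀ t i j, HasDerivAt (fun u => R u i j)
      ((-(skew (ωT t)) * R t + R t * skew (Ω t)) i j) t) :
    ∀ t i j, HasDerivAt (fun u => (Z u * R u) i j)
      ((Z t * R t * skew (Ω t)) i j) t :=
  stmt12_general Ω ωT Z R hZ hR
end

section
/- Let Ω, a_B, a : ℝ → ℝ³ be continuous, let R_z : ℝ → SO(3) be differentiable with Ṙ_z = R_z Ω_×, and let ξ, ν : ℝ → ℝ³ be differentiable with ξ̇ = −Ω_× ξ + ν and ν̇ = −Ω_× ν + a_B − R_zᵀ a. Let ξ̂, ν̂ : ℝ → ℝ³ and γ_z : ℝ → ℝ⁹ be differentiable observer states satisfying ξ̂̇ = −Ω_× ξ̂ + ν̂ + σ_ξ, ν̂̇ = −Ω_× ν̂ + a_B − vec⁻¹(γ_z) a + σ_ν, and γ̇_z = −(I₃ ⊗ Ω_×) γ_z + σ_γ, for continuous innovation terms σ_ξ, σ_ν : ℝ → ℝ³ and σ_γ : ℝ → ℝ⁹. Then the error x := (ξ − ξ̂, ν − ν̂, vec(R_zᵀ) − γ_z) ∈ ℝ^{15} satisfies the linear time-varying equation ẋ(t) = A(t)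 x(t) − σ(t), where A(t) := Ā(t) ⊗ I₃ − I₅ ⊗ Ω(t)_× with Ā(t) := [[0,1,0₁ₓ₃],[0,0,−a(t)ᵀ],[0₃ₓ₁,0₃ₓ₁,0₃ₓ₃]], and σ := (σ_ξ, σ_ν, σ_γ) ∈ ℝ^{15}. -/
/-!
Every error block inherits the drift `−Ω_×`. For the rotation block this is
`d/dt R_zᵀ = (R_z Ω_×)ᵀ = −Ω_× R_zᵀ`, i.e. `d/dt vec(R_zᵀ) = −(I₃ ⊗ Ω_×) vec(R_zᵀ)`, and the
unknown term in the velocity block is linear in the error: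
`−R_zᵀ a + vec⁻¹(γ_z) a = −vec⁻¹(vec(R_zᵀ) − γ_z) a = −(aᵀ ⊗ I₃)(vec(R_zᵀ) − γ_z)`.
Stacking the three blocks gives `A(t) x − σ`.
-/

open Matrix
open scoped Kronecker

/-- The vectorization `vec : ℝ^{3×3} → ℝ⁹` stacking the columns of a matrix: `ℝ⁹` is
realized as `Fin 3 × Fin 3 → ℝ` with index `(j, i)` holding entry `N i j`. -/
def mvec (N : Matrix (Fin 3) (Fin 3) ℝ) : Fin 3 × Fin 3 → ℝ :=
  fun p => N p.2 p.1

/-- The inverse `vec⁻¹ : ℝ⁹ → ℝ^{3×3}` of the vectorization operator. -/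
def unvec (γ : Fin 3 × Fin 3 → ℝ) : Matrix (Fin 3) (Fin 3) ℝ :=
  Matrix.of fun i j => γ (j, i)

section Kronecker

variable {R l m n : Type*} [CommSemiring R] [Fintype m] [Fintype n]

theorem kronecker_one_mulVec_apply [DecidableEq n] (B : Matrix l m R) (y : m × n → R) (k : l)
    (i : n) :
    ((B ⊗ₖ (1 : Matrix n n R)) *ᵥ y) (k, i) = ∑ c, B k c * y (c, i) := by
  simp [mulVec, dotProduct, Fintype.sum_prod_type, one_apply]

theorem one_kronecker_mulVec_apply [DecidableEq m] (M : Matrix l n R) (y : m × n → R) (k : m)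
    (i : l) :
    (((1 : Matrix m m R) ⊗ₖ M) *ᵥ y) (k, i) = (M *ᵥ fun j => y (k, j)) i := by
  simp [mulVec, dotProduct, Fintype.sum_prod_type, one_apply]

end Kronecker

theorem skew_transpose (ω : Fin 3 → ℝ) : (skew ω)ᵀ = -skew ω := by
  ext i j; fin_cases i <;> fin_cases j <;> simp [skew]

theorem unvec_mvec (N : Matrix (Fin 3) (Fin 3) ℝ) : unvec (mvec N) = N := rfl

theorem mvec_neg (N : Matrix (Fin 3) (Fin 3) ℝ) : mvec (-N) = -mvec N := rfl

theorem unvec_sub (g g' : Fin 3 × Fin 3 → ℝ) : unvec (g - g') = unvec g - unvec g' := rfl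

theorem one_kronecker_mulVec_mvec (M N : Matrix (Fin 3) (Fin 3) ℝ) :
    ((1 : Matrix (Fin 3) (Fin 3) ℝ) ⊗ₖ M) *ᵥ mvec N = mvec (M * N) := by
  ext ⟨c, i⟩
  rw [one_kronecker_mulVec_apply]
  rfl

theorem unvec_mulVec_eq_kronecker (γ : Fin 3 × Fin 3 → ℝ) (w : Fin 3 → ℝ) (i : Fin 3) :
    (unvec γ).mulVec w i =
      (((Matrix.of fun (_ : Fin 1) (j : Fin 3) => w j)
        ⊗ₖ (1 : Matrix (Fin 3) (Fin 3) ℝ)).mulVec γ) ((0 : Fin 1), i) := by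
  rw [kronecker_one_mulVec_apply]
  simp only [mulVec, dotProduct, unvec, of_apply, mul_comm]

def stackState (u v : Fin 3 → ℝ) (g : Fin 3 × Fin 3 → ℝ) : Fin 5 × Fin 3 → ℝ :=
  fun p => ![u p.2, v p.2, g (0, p.2), g (1, p.2), g (2, p.2)] p.1

theorem stackState_sub (u v u' v' : Fin 3 → ℝ) (g g' : Fin 3 × Fin 3 → ℝ) :
    stackState u v g - stackState u' v' g' = stackState (u - u') (v - v') (g - g') := by
  ext ⟨k, i⟩; fin_cases k <;> rfl

theorem hasDerivAt_stackState {u v : ℝ → Fin 3 → ℝ} {g : ℝ → Fin 3 × Fin 3 → ℝ}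
    {u' v' : Fin 3 → ℝ} {g' : Fin 3 × Fin 3 → ℝ} {t : ℝ}
    (hu : HasDerivAt u u' t) (hv : HasDerivAt v v' t) (hg : HasDerivAt g g' t) :
    HasDerivAt (fun s => stackState (u s) (v s) (g s)) (stackState u' v' g') t := by
  refine hasDerivAt_pi.2 fun ⟨k, i⟩ => ?_
  fin_cases k
  · exact hasDerivAt_pi.1 hu i
  · exact hasDerivAt_pi.1 hv i
  · exact hasDerivAt_pi.1 hg (0, i)
  · exact hasDerivAt_pi.1 hg (1, i)
  · exact hasDerivAt_pi.1 hg (2, i)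

def abar (w : Fin 3 → ℝ) : Matrix (Fin 5) (Fin 5) ℝ :=
  !![0, 1, 0, 0, 0;
     0, 0, -w 0, -w 1, -w 2;
     0, 0, 0, 0, 0;
     0, 0, 0, 0, 0;
     0, 0, 0, 0, 0]

theorem kronecker_abar_sub_skew_mulVec_stackState (w ω u v : Fin 3 → ℝ) (g : Fin 3 × Fin 3 → ℝ) :
    (abar w ⊗ₖ (1 : Matrix (Fin 3) (Fin 3) ℝ) - (1 : Matrix (Fin 5) (Fin 5) ℝ) ⊗ₖ skew ω)
        *ᵥ stackState u v g =
      stackState (-skew ω *ᵥ u + v) (-skew ω *ᵥ v - unvec g *ᵥ w)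
        (-(((1 : Matrix (Fin 3) (Fin 3) ℝ) ⊗ₖ skew ω) *ᵥ g)) := by
  ext ⟨k, i⟩
  rw [sub_mulVec, Pi.sub_apply, kronecker_one_mulVec_apply, one_kronecker_mulVec_apply]
  fin_cases k <;>
    simp only [stackState, Pi.neg_apply, Pi.add_apply, Pi.sub_apply,
      one_kronecker_mulVec_apply] <;>
    simp only [abar, Fin.zero_eta, Fin.mk_one, Fin.reduceFinMk, of_apply, cons_val',
      cons_val_fin_one, cons_val, cons_val_zero, cons_val_one, Fin.sum_univ_five,
      Fin.sum_univ_three, mulVec, dotProduct, unvec, Matrix.neg_apply] <;>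
    ring

theorem hasDerivAt_mvec_transpose {R : ℝ → Matrix (Fin 3) (Fin 3) ℝ}
    {R' : Matrix (Fin 3) (Fin 3) ℝ} {t : ℝ}
    (hR : ∀ i j, HasDerivAt (fun s => R s i j) (R' i j) t) :
    HasDerivAt (fun s => mvec (R s)ᵀ) (mvec R'ᵀ) t :=
  hasDerivAt_pi.2 fun p => hR p.1 p.2

theorem stmt14_general
    (Ω aB a : ℝ → Fin 3 → ℝ)
    (Rz : ℝ → Matrix (Fin 3) (Fin 3) ℝ)
    (hRz : ∀ t i j, HasDerivAt (fun u => Rz u i j) ((Rz t * skew (Ω t)) i j) t)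
    (ξ ν : ℝ → Fin 3 → ℝ)
    (hξ : ∀ t i, HasDerivAt (fun u => ξ u i)
      ((-(skew (Ω t))).mulVec (ξ t) i + ν t i) t)
    (hν : ∀ t i, HasDerivAt (fun u => ν u i)
      ((-(skew (Ω t))).mulVec (ν t) i + aB t i - (Rz t)ᵀ.mulVec (a t) i) t)
    (ξhat νhat : ℝ → Fin 3 → ℝ) (γz : ℝ → Fin 3 × Fin 3 → ℝ)
    (σξ σν : ℝ → Fin 3 → ℝ) (σγ : ℝ → Fin 3 × Fin 3 → ℝ)
    (hξhat : ∀ t i, HasDerivAt (fun u => ξhat u i)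
      ((-(skew (Ω t))).mulVec (ξhat t) i + νhat t i + σξ t i) t)
    (hνhat : ∀ t i, HasDerivAt (fun u => νhat u i)
      ((-(skew (Ω t))).mulVec (νhat t) i + aB t i
        - (unvec (γz t)).mulVec (a t) i + σν t i) t)
    (hγz : ∀ t p, HasDerivAt (fun u => γz u p)
      ((-(((1 : Matrix (Fin 3) (Fin 3) ℝ) ⊗ₖ skew (Ω t)).mulVec (γz t))) p + σγ t p) t)
    (Abar : ℝ → Matrix (Fin 5) (Fin 5) ℝ)
    (hAbar : ∀ t, Abar t =
      !![0, 1, 0, 0, 0;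
         0, 0, -a t 0, -a t 1, -a t 2;
         0, 0, 0, 0, 0;
         0, 0, 0, 0, 0;
         0, 0, 0, 0, 0])
    (x : ℝ → Fin 5 × Fin 3 → ℝ)
    (hx : ∀ t p, x t p =
      ![ξ t p.2 - ξhat t p.2,
        ν t p.2 - νhat t p.2,
        mvec ((Rz t)ᵀ) (0, p.2) - γz t (0, p.2),
        mvec ((Rz t)ᵀ) (1, p.2) - γz t (1, p.2),
        mvec ((Rz t)ᵀ) (2, p.2) - γz t (2, p.2)] p.1)
    (σ : ℝ → Fin 5 × Fin 3 → ℝ)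
    (hσ : ∀ t p, σ t p =
      ![σξ t p.2, σν t p.2, σγ t (0, p.2), σγ t (1, p.2), σγ t (2, p.2)] p.1) :
    -- the identity vec⁻¹(γ)w = (wᵀ ⊗ I₃)γ
    (∀ (γ : Fin 3 × Fin 3 → ℝ) (w : Fin 3 → ℝ) (i : Fin 3),
      (unvec γ).mulVec w i =
        (((Matrix.of fun (_ : Fin 1) (j : Fin 3) => w j)
          ⊗ₖ (1 : Matrix (Fin 3) (Fin 3) ℝ)).mulVec γ) ((0 : Fin 1), i))
    ∧
    -- the linear time-varying error dynamics ẋ = A(t)x − σ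
    (∀ t p, HasDerivAt (fun u => x u p)
      (((Abar t ⊗ₖ (1 : Matrix (Fin 3) (Fin 3) ℝ)
          - (1 : Matrix (Fin 5) (Fin 5) ℝ) ⊗ₖ skew (Ω t)).mulVec (x t)) p - σ t p) t) := by
  refine ⟨unvec_mulVec_eq_kronecker, fun t => hasDerivAt_pi.1 ?_⟩
  obtain rfl : x = fun u => stackState (ξ u - ξhat u) (ν u - νhat u) (mvec (Rz u)ᵀ - γz u) :=
    funext fun u => funext (hx u)
  have hσt : σ t = stackState (σξ t) (σν t) (σγ t) := funext (hσ t)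
  have hRzT : HasDerivAt (fun u => mvec (Rz u)ᵀ)
      (-((1 ⊗ₖ skew (Ω t)) *ᵥ mvec (Rz t)ᵀ)) t := by
    have := hasDerivAt_mvec_transpose (hRz t)
    rwa [transpose_mul, skew_transpose, neg_mul, mvec_neg, ← one_kronecker_mulVec_mvec] at this
  refine (hasDerivAt_stackState
    ((hasDerivAt_pi.2 (hξ t)).sub (hasDerivAt_pi.2 (hξhat t)))
    ((hasDerivAt_pi.2 (hν t)).sub (hasDerivAt_pi.2 (hνhat t)))
    (hRzT.sub (hasDerivAt_pi.2 (hγz t)))).congr_deriv ?_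
  change _ = (_ : Fin 5 × Fin 3 → ℝ) - σ t
  rw [hAbar t, ← abar, kronecker_abar_sub_skew_mulVec_stackState, hσt, stackState_sub]
  congr 1 <;> ext <;>
    simp only [Pi.add_apply, Pi.neg_apply, Pi.sub_apply, mulVec_sub, sub_mulVec, unvec_sub,
      unvec_mvec] <;>
    ring

/-- Equation (12) of the paper: the estimation error
`x = (ξ − ξ̂, ν − ν̂, vec(R_zᵀ) − γ_z) ∈ ℝ^{15}` of the ambient-space observer obeys
the linear time-varying dynamics `ẋ = A(t)x − σ` with
`A(t) = Ā(t) ⊗ I₃ − I₅ ⊗ Ω(t)_×`.  `ℝ^{15}` is realized as `Fin 5 × Fin 3 → ℝ`,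
derivatives are componentwise, and the identity `vec⁻¹(γ)a = (aᵀ ⊗ I₃)γ` is part of
the claim. -/
theorem stmt14
    (Ω aB a : ℝ → Fin 3 → ℝ)
    (hΩ : Continuous Ω) (haB : Continuous aB) (ha : Continuous a)
    (Rz : ℝ → Matrix (Fin 3) (Fin 3) ℝ)
    (hRz_SO : ∀ t, (Rz t)ᵀ * Rz t = 1 ∧ (Rz t).det = 1)
    (hRz : ∀ t i j, HasDerivAt (fun u => Rz u i j) ((Rz t * skew (Ω t)) i j) t)
    (ξ ν : ℝ → Fin 3 → ℝ)
    (hξ : ∀ t i, HasDerivAt (fun u => ξ u i)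
      ((-(skew (Ω t))).mulVec (ξ t) i + ν t i) t)
    (hν : ∀ t i, HasDerivAt (fun u => ν u i)
      ((-(skew (Ω t))).mulVec (ν t) i + aB t i - (Rz t)ᵀ.mulVec (a t) i) t)
    (ξhat νhat : ℝ → Fin 3 → ℝ) (γz : ℝ → Fin 3 × Fin 3 → ℝ)
    (σξ σν : ℝ → Fin 3 → ℝ) (σγ : ℝ → Fin 3 × Fin 3 → ℝ)
    (hσξ : Continuous σξ) (hσν : Continuous σν) (hσγ : Continuous σγ)
    (hξhat : ∀ t i, HasDerivAt (fun u => ξhat u i)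
      ((-(skew (Ω t))).mulVec (ξhat t) i + νhat t i + σξ t i) t)
    (hνhat : ∀ t i, HasDerivAt (fun u => νhat u i)
      ((-(skew (Ω t))).mulVec (νhat t) i + aB t i
        - (unvec (γz t)).mulVec (a t) i + σν t i) t)
    (hγz : ∀ t p, HasDerivAt (fun u => γz u p)
      ((-(((1 : Matrix (Fin 3) (Fin 3) ℝ) ⊗ₖ skew (Ω t)).mulVec (γz t))) p + σγ t p) t)
    (Abar : ℝ → Matrix (Fin 5) (Fin 5) ℝ)
    (hAbar : ∀ t, Abar t =
      !![0, 1, 0, 0, 0;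
         0, 0, -a t 0, -a t 1, -a t 2;
         0, 0, 0, 0, 0;
         0, 0, 0, 0, 0;
         0, 0, 0, 0, 0])
    (x : ℝ → Fin 5 × Fin 3 → ℝ)
    (hx : ∀ t p, x t p =
      ![ξ t p.2 - ξhat t p.2,
        ν t p.2 - νhat t p.2,
        mvec ((Rz t)ᵀ) (0, p.2) - γz t (0, p.2),
        mvec ((Rz t)ᵀ) (1, p.2) - γz t (1, p.2),
        mvec ((Rz t)ᵀ) (2, p.2) - γz t (2, p.2)] p.1)
    (σ : ℝ → Fin 5 × Fin 3 → ℝ)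
    (hσ : ∀ t p, σ t p =
      ![σξ t p.2, σν t p.2, σγ t (0, p.2), σγ t (1, p.2), σγ t (2, p.2)] p.1) :
    -- the identity vec⁻¹(γ)w = (wᵀ ⊗ I₃)γ
    (∀ (γ : Fin 3 × Fin 3 → ℝ) (w : Fin 3 → ℝ) (i : Fin 3),
      (unvec γ).mulVec w i =
        (((Matrix.of fun (_ : Fin 1) (j : Fin 3) => w j)
          ⊗ₖ (1 : Matrix (Fin 3) (Fin 3) ℝ)).mulVec γ) ((0 : Fin 1), i))
    ∧
    -- the linear time-varying error dynamics ẋ = A(t)x − σ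
    (∀ t p, HasDerivAt (fun u => x u p)
      (((Abar t ⊗ₖ (1 : Matrix (Fin 3) (Fin 3) ℝ)
          - (1 : Matrix (Fin 5) (Fin 5) ℝ) ⊗ₖ skew (Ω t)).mulVec (x t)) p - σ t p) t) :=
  stmt14_general Ω aB a Rz hRz ξ ν hξ hν ξhat νhat γz σξ σν σγ hξhat hνhat hγz Abar hAbar x hx σ hσ
end
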